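/- Let N be a positive integer and μ, ε > 0 real. Let D₁, D₂, D₃ be pairwise commuting skew-symmetric real N×N matrices, 𝔻 := [[0, −D₃, D₂], [D₃, 0, −D₁], [−D₂, D₁, 0]] (3N×3N), and 𝒟 := (1/√(με))·[[0, −𝔻], [𝔻, 0]] (6N×6N). Given H⁰, E⁰ ∈ ℝ^(3N), define (√μ·H^t, √ε·E^t) = exp(t𝒟)·(√μ·H⁰, √ε·E⁰). Then the discrete helicity is exactly conserved: (1/(2ε))·⟨H^t, 𝔻H^t⟩ + (1/(2μ))·⟨E^t, 𝔻E^t⟩ = (1/(2ε))·⟨H⁰, 𝔻H⁰⟩ + (1/(2μ))·⟨E⁰, 𝔻E⁰⟩ for all t ∈ ℝ. -/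

import Mathlib

open Matrix

/-- A `3N × 3N` block matrix built from a `3 × 3` array of `N × N` blocks. -/
def blockMat3 {N : ℕ} {α : Type*} (A : Fin 3 → Fin 3 → Matrix (Fin N) (Fin N) α) :
    Matrix (Fin 3 × Fin N) (Fin 3 × Fin N) α :=
  Matrix.of fun p q => A p.1 q.1 p.2 q.2

/-- The `3N × 3N` block-diagonal matrix with each diagonal block equal to `D`. -/
def blockDiag3 {N : ℕ} {α : Type*} [Zero α] (D : Matrix (Fin N) (Fin N) α) :
    Matrix (Fin 3 × Fin N) (Fin 3 × Fin N) α :=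
  Matrix.of fun p q => if p.1 = q.1 then D p.2 q.2 else 0

/-!
The scheme is `exp(t𝒟)` with `𝒟` skew-symmetric, because the discrete curl `𝔻` is symmetric.
`𝒟` commutes with `diag(𝔻, 𝔻)`, so `exp(t𝒟)` preserves the quadratic form of `diag(𝔻, 𝔻)`,
which on `(√μ Hᵗ, √ε Eᵗ)` is `μ ⟨Hᵗ, 𝔻Hᵗ⟩ + ε ⟨Eᵗ, 𝔻Eᵗ⟩`, i.e. `2με ℋ₁`.
-/

theorem blockMat3_transpose {N : ℕ} {α : Type*} (A : Fin 3 → Fin 3 → Matrix (Fin N) (Fin N) α) :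
    (blockMat3 A)ᵀ = blockMat3 fun i j => (A j i)ᵀ :=
  rfl

theorem blockMat3_curl_transpose {N : ℕ} {α : Type*} [AddGroup α]
    {D1 D2 D3 : Matrix (Fin N) (Fin N) α} (hD1 : D1ᵀ = -D1) (hD2 : D2ᵀ = -D2) (hD3 : D3ᵀ = -D3) :
    (blockMat3 ![![0, -D3, D2], ![D3, 0, -D1], ![-D2, D1, 0]])ᵀ =
      blockMat3 ![![0, -D3, D2], ![D3, 0, -D1], ![-D2, D1, 0]] := by
  rw [blockMat3_transpose]
  congr 1
  ext i j : 2
  fin_cases i <;> fin_cases j <;> simp [hD1, hD2, hD3]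

namespace Matrix

theorem dotProduct_mulVec_mulVec_of_transpose_mul_mul_eq {n R : Type*} [Fintype n]
    [CommSemiring R] {P M : Matrix n n R} (h : Pᵀ * M * P = M) (x : n → R) :
    P *ᵥ x ⬝ᵥ M *ᵥ (P *ᵥ x) = x ⬝ᵥ M *ᵥ x := by
  conv_rhs => rw [← h]
  rw [← mulVec_mulVec, ← mulVec_mulVec, dotProduct_mulVec x, vecMul_transpose]

theorem transpose_mul_mul_exp_of_commute {n 𝔸 : Type*} [Fintype n] [DecidableEq n]
    [NormedCommRing 𝔸] [NormedAlgebra ℚ 𝔸] [CompleteSpace 𝔸] {A M : Matrix n n 𝔸}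
    (hA : Aᵀ = -A) (hAM : Commute A M) :
    (NormedSpace.exp A)ᵀ * M * NormedSpace.exp A = M := by
  rw [← exp_transpose, hA, (hAM.neg_left.exp_left).eq, Matrix.mul_assoc,
    ← exp_add_of_commute _ _ (Commute.neg_left (Commute.refl A)), neg_add_cancel,
    NormedSpace.exp_zero, Matrix.mul_one]

section Maxwell

variable {n R : Type*} [CommRing R] {K : Matrix n n R}

theorem fromBlocks_zero_neg_self_zero_transpose (hK : Kᵀ = K) :
    (fromBlocks 0 (-K) K 0)ᵀ = -fromBlocks 0 (-K) K 0 := by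
  simp [fromBlocks_transpose, fromBlocks_neg, hK]

theorem commute_fromBlocks_zero_neg_self_zero [Fintype n] (K : Matrix n n R) :
    Commute (fromBlocks 0 (-K) K 0) (fromBlocks K 0 0 K) := by
  simp [Commute, SemiconjBy, fromBlocks_multiply]

theorem sumElim_dotProduct_fromBlocks_mulVec_sumElim [Fintype n] (K : Matrix n n R)
    (v w : n → R) :
    Sum.elim v w ⬝ᵥ fromBlocks K 0 0 K *ᵥ Sum.elim v w = v ⬝ᵥ K *ᵥ v + w ⬝ᵥ K *ᵥ w := by
  simp [fromBlocks_mulVec, sumElim_dotProduct_sumElim]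

end Maxwell

end Matrix

theorem discrete_helicity_conservation_H1_general {N : ℕ} (μ ε : ℝ) (hμ : 0 < μ) (hε : 0 < ε)
    (D1 D2 D3 : Matrix (Fin N) (Fin N) ℝ)
    (hD1 : D1ᵀ = -D1) (hD2 : D2ᵀ = -D2) (hD3 : D3ᵀ = -D3)
    (𝔻 : Matrix (Fin 3 × Fin N) (Fin 3 × Fin N) ℝ)
    (h𝔻 : 𝔻 = blockMat3 ![![0, -D3, D2], ![D3, 0, -D1], ![-D2, D1, 0]])
    (𝒟 : Matrix ((Fin 3 × Fin N) ⊕ (Fin 3 × Fin N)) ((Fin 3 × Fin N) ⊕ (Fin 3 × Fin N)) ℝ)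
    (h𝒟 : 𝒟 = (Real.sqrt (μ * ε))⁻¹ • Matrix.fromBlocks 0 (-𝔻) 𝔻 0)
    (H E : ℝ → (Fin 3 × Fin N → ℝ))
    (hprop : ∀ t : ℝ,
      Sum.elim (fun i => Real.sqrt μ * H t i) (fun i => Real.sqrt ε * E t i) =
        (NormedSpace.exp (t • 𝒟)).mulVec
          (Sum.elim (fun i => Real.sqrt μ * H 0 i) (fun i => Real.sqrt ε * E 0 i))) :
    ∀ t : ℝ,
      (1 / (2 * ε)) * (H t ⬝ᵥ 𝔻.mulVec (H t)) + (1 / (2 * μ)) * (E t ⬝ᵥ 𝔻.mulVec (E t)) =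
        (1 / (2 * ε)) * (H 0 ⬝ᵥ 𝔻.mulVec (H 0)) + (1 / (2 * μ)) * (E 0 ⬝ᵥ 𝔻.mulVec (E 0)) := by
  intro t
  have h𝔻_symm : 𝔻ᵀ = 𝔻 := h𝔻 ▸ blockMat3_curl_transpose hD1 hD2 hD3
  have h𝒟_skew : (t • 𝒟)ᵀ = -(t • 𝒟) := by
    rw [h𝒟, transpose_smul, transpose_smul, fromBlocks_zero_neg_self_zero_transpose h𝔻_symm,
      smul_neg, smul_neg]
  have h𝒟_comm : Commute (t • 𝒟) (fromBlocks 𝔻 0 0 𝔻) := by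
    rw [h𝒟]
    exact ((commute_fromBlocks_zero_neg_self_zero 𝔻).smul_left _).smul_left t
  have hquad : ∀ s, Sum.elim (fun i => √μ * H s i) (fun i => √ε * E s i) ⬝ᵥ
      fromBlocks 𝔻 0 0 𝔻 *ᵥ Sum.elim (fun i => √μ * H s i) (fun i => √ε * E s i) =
      μ * (H s ⬝ᵥ 𝔻 *ᵥ H s) + ε * (E s ⬝ᵥ 𝔻 *ᵥ E s) := by
    intro s
    change Sum.elim (√μ • H s) (√ε • E s) ⬝ᵥ _ *ᵥ Sum.elim (√μ • H s) (√ε • E s) = _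
    simp only [sumElim_dotProduct_fromBlocks_mulVec_sumElim, mulVec_smul, smul_dotProduct,
      dotProduct_smul, smul_eq_mul, ← mul_assoc, Real.mul_self_sqrt hμ.le,
      Real.mul_self_sqrt hε.le]
  have hconserved := congrArg (fun x => x ⬝ᵥ fromBlocks 𝔻 0 0 𝔻 *ᵥ x) (hprop t)
  simp only [dotProduct_mulVec_mulVec_of_transpose_mul_mul_eq
    (transpose_mul_mul_exp_of_commute h𝒟_skew h𝒟_comm), hquad] at hconserved
  field_simp
  linarith

/-- the fully discrete exponential scheme exactly conserves the discrete helicity ℋ₁: `(1/(2ε))⟨Hᵗ, 𝔻Hᵗ⟩ + (1/(2μ))⟨Eᵗ, 𝔻Eᵗ⟩` is constant in `t`. -/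
theorem discrete_helicity_conservation_H1 {N : ℕ} (hN : 0 < N) (μ ε : ℝ) (hμ : 0 < μ) (hε : 0 < ε)
    (D1 D2 D3 : Matrix (Fin N) (Fin N) ℝ)
    (h12 : D1 * D2 = D2 * D1) (h13 : D1 * D3 = D3 * D1) (h23 : D2 * D3 = D3 * D2)
    (hD1 : D1ᵀ = -D1) (hD2 : D2ᵀ = -D2) (hD3 : D3ᵀ = -D3)
    (𝔻 : Matrix (Fin 3 × Fin N) (Fin 3 × Fin N) ℝ)
    (h𝔻 : 𝔻 = blockMat3 ![![0, -D3, D2], ![D3, 0, -D1], ![-D2, D1, 0]])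
    (𝒟 : Matrix ((Fin 3 × Fin N) ⊕ (Fin 3 × Fin N)) ((Fin 3 × Fin N) ⊕ (Fin 3 × Fin N)) ℝ)
    (h𝒟 : 𝒟 = (Real.sqrt (μ * ε))⁻¹ • Matrix.fromBlocks 0 (-𝔻) 𝔻 0)
    (H E : ℝ → (Fin 3 × Fin N → ℝ))
    (hprop : ∀ t : ℝ,
      Sum.elim (fun i => Real.sqrt μ * H t i) (fun i => Real.sqrt ε * E t i) =
        (NormedSpace.exp (t • 𝒟)).mulVec
          (Sum.elim (fun i => Real.sqrt μ * H 0 i) (fun i => Real.sqrt ε * E 0 i))) :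
    ∀ t : ℝ,
      (1 / (2 * ε)) * (H t ⬝ᵥ 𝔻.mulVec (H t)) + (1 / (2 * μ)) * (E t ⬝ᵥ 𝔻.mulVec (E t)) =
        (1 / (2 * ε)) * (H 0 ⬝ᵥ 𝔻.mulVec (H 0)) + (1 / (2 * μ)) * (E 0 ⬝ᵥ 𝔻.mulVec (E 0)) :=
  discrete_helicity_conservation_H1_general μ ε hμ hε D1 D2 D3 hD1 hD2 hD3 𝔻 h𝔻 𝒟 h𝒟 H E hprop
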